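/- Formal Lagrange inversion: let R be a commutative ℚ-algebra, let a ∈ R[[x]] be a formal power series of order ≥ 2 (i.e. a ∈ x²·R[[x]]) and let f ∈ R[[x]]. There is a unique power series w ∈ R[[x]] with zero constant term satisfying w = x + a∘w, and the series Σ_{n≥0} (1/n!)·(d/dx)^n ( a(x)^n·f(x) ) converges x-adically (its n-th term has order ≥ n) to (f∘w) · (1 − (a′∘w))^{−1}, where 1 − (a′∘w) has constant term 1 and hence is a unit in R[[x]]. -/

import Mathlib

open PowerSeries

noncomputable section
namespace Formal

variable {R : Type*} [CommRing R] [Algebra ℚ R]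

/-- Composition `h ∘ s = ∑_n (coeff n h) · s^n`; the coefficientwise truncation is valid
whenever `constantCoeff s = 0`, since then `s^n` has order `≥ n`. -/
def comp (h s : PowerSeries R) : PowerSeries R :=
  PowerSeries.mk fun N => ∑ k ∈ Finset.range (N + 1), coeff k h * coeff N (s ^ k)

/-- The `n`-th term `(1/n!)·(d/dx)^n (a^n·f)` of the Lagrange inversion series. -/
def lagrangeTerm (a f : PowerSeries R) (n : ℕ) : PowerSeries R :=
  ((n.factorial : ℚ)⁻¹) • (fun u => d⁄dX R u)^[n] (a ^ n * f)

end Formal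

/-!
Write `X - a = X * u` with `u` a unit, so that `w` is the compositional inverse of `φ = X * u`.
The closed form of `(1 - y)^{-(N+1)}` turns the `N`-th coefficient of the Lagrange series into
`[X^N] f * u⁻¹^(N+1)`, the classical form `[X^N] f * (X / φ)^(N+1)`. Both this and
`f ↦ (f ∘ w) * w'` are `R`-linear maps sending `φ'` to `1` and `φ * g` to `X` times the image
of `g`; as every series is `r • φ' + φ * g`, induction on the coefficient index shows that the
two maps agree. Finally `1 - a' ∘ w = φ' ∘ w` is the inverse of `w'` by the chain rule for
`φ ∘ w = X`.
-/

namespace PowerSeries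

variable {R : Type*} [CommRing R]

theorem coeff_pow_of_lt {c : R⟦X⟧} (hc : constantCoeff c = 0) {N k : ℕ} (h : N < k) :
    coeff N (c ^ k) = 0 :=
  X_pow_dvd_iff.mp (pow_dvd_pow_of_dvd (X_dvd_iff.mpr hc) k) N h

theorem X_pow_dvd_subst_sub_sum {c : R⟦X⟧} (hc : constantCoeff c = 0) (h : R⟦X⟧) (M : ℕ) :
    X ^ M ∣ h.subst c - ∑ k ∈ Finset.range M, coeff k h • c ^ k := by
  refine X_pow_dvd_iff.mpr fun N hN => ?_
  have hsupp : (Function.support fun k => coeff k h • coeff N (c ^ k)) ⊆ Finset.range M :=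
    fun k hk => Finset.mem_range.mpr <| by
      by_contra! hMk
      exact hk (by simp only [coeff_pow_of_lt hc (hN.trans_le hMk), smul_zero])
  rw [map_sub, coeff_subst' (HasSubst.of_constantCoeff_zero' hc),
    finsum_eq_sum_of_support_subset _ hsupp, map_sum]
  simp

theorem coeff_mul_subst {c : R⟦X⟧} (hc : constantCoeff c = 0) (f h : R⟦X⟧) (N : ℕ) :
    coeff N (f * h.subst c) = ∑ k ∈ Finset.range (N + 1), coeff k h * coeff N (f * c ^ k) := by
  obtain ⟨r, hr⟩ := X_pow_dvd_subst_sub_sum hc h (N + 1)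
  rw [sub_eq_iff_eq_add'.mp hr, mul_add, map_add, mul_left_comm,
    coeff_X_pow_mul', if_neg (by omega), add_zero, Finset.mul_sum, map_sum]
  simp

theorem coeff_mul_inv_pow_succ {c : R⟦X⟧} (hc : constantCoeff c = 0) {u : R⟦X⟧ˣ}
    (hu : (u : R⟦X⟧) = 1 - c) (f : R⟦X⟧) (N : ℕ) :
    coeff N (f * (↑u⁻¹ : R⟦X⟧) ^ (N + 1)) =
      ∑ n ∈ Finset.range (N + 1), ((N + n).choose n : R) * coeff N (f * c ^ n) := by
  have hc' := HasSubst.of_constantCoeff_zero' hc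
  have hinv : (↑u⁻¹ : R⟦X⟧) ^ (N + 1) = (mk fun n => ((N + n).choose N : R)).subst c := by
    rw [← Units.val_pow_eq_pow_val, inv_pow]
    refine Units.inv_eq_of_mul_eq_one_right ?_
    have := congrArg (subst c) (mk_add_choose_mul_one_sub_pow_eq_one (S := R) (d := N))
    rwa [subst_mul hc', subst_pow hc', subst_sub hc', subst_X hc', ← coe_substAlgHom hc', map_one,
      coe_substAlgHom, mul_comm, ← hu, ← Units.val_pow_eq_pow_val] at this
  rw [hinv, coeff_mul_subst hc]
  refine Finset.sum_congr rfl fun n _ => ?_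
  rw [coeff_mk, Nat.choose_symm_add]

def lagrangeMap (u : R⟦X⟧ˣ) : R⟦X⟧ →ₗ[R] R⟦X⟧ where
  toFun f := mk fun N => coeff N (f * (↑u⁻¹ : R⟦X⟧) ^ (N + 1))
  map_add' f g := by ext N; simp [add_mul]
  map_smul' r f := by ext N; simp

theorem coeff_lagrangeMap (u : R⟦X⟧ˣ) (f : R⟦X⟧) (N : ℕ) :
    coeff N (lagrangeMap u f) = coeff N (f * (↑u⁻¹ : R⟦X⟧) ^ (N + 1)) := by
  simp [lagrangeMap]

theorem lagrangeMap_X_mul_mul (u : R⟦X⟧ˣ) (g : R⟦X⟧) :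
    lagrangeMap u (X * (u : R⟦X⟧) * g) = X * lagrangeMap u g := by
  ext (_ | N)
  · simp [coeff_lagrangeMap, mul_assoc]
  · have : X * (u : R⟦X⟧) * g * (↑u⁻¹ : R⟦X⟧) ^ (N + 2) =
        X * (g * (↑u⁻¹ : R⟦X⟧) ^ (N + 1)) := by
      linear_combination (X * g * (↑u⁻¹ : R⟦X⟧) ^ (N + 1)) * u.mul_inv
    rw [coeff_lagrangeMap, this, coeff_succ_X_mul, coeff_succ_X_mul, coeff_lagrangeMap]

theorem coeff_X_mul_derivative (h : R⟦X⟧) (N : ℕ) : coeff N (X * d⁄dX R h) = N * coeff N h := by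
  cases N with
  | zero => simp
  | succ N => rw [coeff_succ_X_mul, coeff_derivative, mul_comm]; push_cast; rfl

theorem lagrangeMap_derivative_X_mul [IsAddTorsionFree R] (u : R⟦X⟧ˣ) :
    lagrangeMap u (d⁄dX R (X * (u : R⟦X⟧))) = 1 := by
  set v : R⟦X⟧ := ↑u⁻¹
  have huv : (u : R⟦X⟧) * v = 1 := u.mul_inv
  have hd : d⁄dX R (X * (u : R⟦X⟧)) = (u : R⟦X⟧) + X * d⁄dX R u := by
    simp [Derivation.leibniz]; ring
  ext (_ | N)
  · have : d⁄dX R (X * (u : R⟦X⟧)) * v = 1 + X * (d⁄dX R u * v) := by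
      rw [hd]; linear_combination huv
    rw [coeff_lagrangeMap, pow_one, this]
    simp
  · rw [coeff_lagrangeMap, coeff_one, if_neg N.succ_ne_zero]
    -- `φ' / φ^(N+2)` is the derivative of `-φ^(-(N+1)) / (N+1)`, so it has no residue.
    have key : (N + 1) • (d⁄dX R (X * (u : R⟦X⟧)) * v ^ (N + 1 + 1)) =
        (N + 1) • v ^ (N + 1) - X * d⁄dX R (v ^ (N + 1)) := by
      rw [derivative_pow, derivative_inv, hd]
      simp only [nsmul_eq_mul, Nat.add_sub_cancel]
      push_cast
      linear_combination ((N + 1) * v ^ (N + 1)) * huv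
    have hcoeff := congrArg (coeff (N + 1)) key
    rw [map_sub, map_nsmul, map_nsmul, coeff_X_mul_derivative, ← nsmul_eq_mul, sub_self] at hcoeff
    exact nsmul_right_injective N.succ_ne_zero (hcoeff.trans (smul_zero _).symm)

theorem linearMap_ext_of_map_X_mul_mul {T S : R⟦X⟧ →ₗ[R] R⟦X⟧} (u : R⟦X⟧ˣ) {e : R⟦X⟧}
    (he : IsUnit (constantCoeff e)) (hTS : T e = S e)
    (hT : ∀ g, T (X * (u : R⟦X⟧) * g) = X * T g) (hS : ∀ g, S (X * (u : R⟦X⟧) * g) = X * S g) :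
    T = S := by
  have hdecomp : ∀ f, ∃ (r : R) (g : R⟦X⟧), f = r • e + X * (u : R⟦X⟧) * g := by
    intro f
    obtain ⟨h, hh⟩ : X ∣ f - (constantCoeff f * ↑he.unit⁻¹) • e := by
      rw [X_dvd_iff]; simp [mul_assoc]
    refine ⟨constantCoeff f * ↑he.unit⁻¹, ↑u⁻¹ * h, ?_⟩
    rw [← mul_assoc, mul_assoc X, u.mul_inv, mul_one, ← hh]
    abel
  suffices ∀ N f, coeff N (T f) = coeff N (S f) from
    LinearMap.ext fun f => ext fun N => this N f
  intro N
  induction N with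
  | zero =>
    intro f; obtain ⟨r, g, rfl⟩ := hdecomp f
    simp [hT, hS, hTS]
  | succ N ih =>
    intro f; obtain ⟨r, g, rfl⟩ := hdecomp f
    simp [hT, hS, hTS, coeff_succ_X_mul, ih g]

theorem subst_derivative_mul_derivative {φ w : R⟦X⟧} (hw : HasSubst w) (hφw : φ.subst w = X) :
    (d⁄dX R φ).subst w * d⁄dX R w = 1 := by
  rw [← derivative_subst hw, hφw, derivative_X]

theorem lagrangeMap_eq_subst_mul_derivative [IsAddTorsionFree R] (u : R⟦X⟧ˣ) {w : R⟦X⟧}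
    (hw : HasSubst w) (huw : (X * (u : R⟦X⟧)).subst w = X) (f : R⟦X⟧) :
    lagrangeMap u f = f.subst w * d⁄dX R w := by
  let S : R⟦X⟧ →ₗ[R] R⟦X⟧ := LinearMap.mulRight R (d⁄dX R w) ∘ₗ (substAlgHom hw).toLinearMap
  have hS : ∀ g, S g = g.subst w * d⁄dX R w := fun g => by simp [S, coe_substAlgHom]
  have he : IsUnit (constantCoeff (d⁄dX R (X * (u : R⟦X⟧)))) := by
    simpa [Derivation.leibniz] using (u.map constantCoeff.toMonoidHom).isUnit
  have := linearMap_ext_of_map_X_mul_mul (T := lagrangeMap u) (S := S) u he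
    (by rw [lagrangeMap_derivative_X_mul, hS, subst_derivative_mul_derivative hw huw])
    (lagrangeMap_X_mul_mul u) (fun g => by rw [hS, hS, subst_mul hw, huw, mul_assoc])
  rw [this, hS]

theorem existsUnique_subst_eq_X {φ : R⟦X⟧} (hφ : constantCoeff φ = 0)
    (hφ1 : IsUnit (coeff 1 φ)) : ∃! w : R⟦X⟧, constantCoeff w = 0 ∧ φ.subst w = X := by
  set ψ := φ.substInvOfIsUnit hφ1
  refine ⟨ψ, ⟨constantCoeff_substInvOfIsUnit _ _, subst_substInvOfIsUnit_right _ hφ hφ1⟩, ?_⟩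
  rintro v ⟨hv0, hv⟩
  have hv' := HasSubst.of_constantCoeff_zero' hv0
  calc v = subst v (X : R⟦X⟧) := (subst_X hv').symm
    _ = subst v (subst φ ψ) := by rw [subst_substInvOfIsUnit_left _ hφ]
    _ = subst (subst v φ) ψ := subst_comp_subst_apply (HasSubst.of_constantCoeff_zero' hφ) hv' _
    _ = ψ := by rw [hv, X_subst]

end PowerSeries

namespace Formal

variable {R : Type*} [CommRing R]

theorem comp_eq_subst {s : R⟦X⟧} (hs : constantCoeff s = 0) (h : R⟦X⟧) :
    comp h s = h.subst s := by
  ext N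
  simpa [comp] using (coeff_mul_subst hs 1 h N).symm

theorem subst_X_sub_eq_X_iff {w : R⟦X⟧} (hw : constantCoeff w = 0) (a : R⟦X⟧) :
    (X - a).subst w = X ↔ w = X + comp a w := by
  have hw' := HasSubst.of_constantCoeff_zero' hw
  rw [subst_sub hw', subst_X hw', ← comp_eq_subst hw, sub_eq_iff_eq_add', add_comm]

theorem one_sub_comp_derivative_mul_derivative {a w : R⟦X⟧} (hw0 : constantCoeff w = 0)
    (hw : w = X + comp a w) : (1 - comp (d⁄dX R a) w) * d⁄dX R w = 1 := by
  have hw' := HasSubst.of_constantCoeff_zero' hw0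
  have h1 : subst w (1 : R⟦X⟧) = 1 := by rw [← coe_substAlgHom hw', map_one]
  have := subst_derivative_mul_derivative hw' ((subst_X_sub_eq_X_iff hw0 a).mpr hw)
  rwa [map_sub, derivative_X, subst_sub hw', h1, ← comp_eq_subst hw0] at this

variable [Algebra ℚ R]

theorem coeff_lagrangeTerm (a f : R⟦X⟧) (n N : ℕ) :
    coeff N (lagrangeTerm a f n) = (N + n).choose n * coeff (N + n) (a ^ n * f) := by
  rw [lagrangeTerm, coeff_smul, coeff_iterate_derivative, Nat.ascFactorial_eq_factorial_mul_choose,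
    Nat.cast_mul, mul_assoc, ← nsmul_eq_mul, ← Nat.cast_smul_eq_nsmul ℚ, smul_smul,
    inv_mul_cancel₀ (by positivity), one_smul]

theorem coeff_lagrangeTerm_eq_zero {a : R⟦X⟧} (ha : X ^ 2 ∣ a) (f : R⟦X⟧) {n N : ℕ} (h : N < n) :
    coeff N (lagrangeTerm a f n) = 0 := by
  have hdvd : X ^ (2 * n) ∣ a ^ n * f := by
    rw [pow_mul]; exact dvd_mul_of_dvd_left (pow_dvd_pow_of_dvd ha n) f
  rw [coeff_lagrangeTerm, X_pow_dvd_iff.mp hdvd _ (by omega), mul_zero]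

theorem sum_coeff_lagrangeTerm {c : R⟦X⟧} (hc : constantCoeff c = 0) {u : R⟦X⟧ˣ}
    (hu : (u : R⟦X⟧) = 1 - c) (f : R⟦X⟧) (N : ℕ) :
    ∑ n ∈ Finset.range (N + 1), coeff N (lagrangeTerm (X * c) f n) = coeff N (lagrangeMap u f) := by
  rw [coeff_lagrangeMap, coeff_mul_inv_pow_succ hc hu]
  refine Finset.sum_congr rfl fun n _ => ?_
  rw [coeff_lagrangeTerm, mul_pow, mul_assoc, coeff_X_pow_mul, mul_comm (c ^ n)]

/-- **formal Lagrange inversion.** Let `R` be a commutative `ℚ`-algebra,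
`a ∈ x²·R[[x]]` and `f ∈ R[[x]]`. There is a unique power series `w` with zero constant
term satisfying `w = x + a∘w`; moreover the `n`-th term `(1/n!)(d/dx)^n(a^n f)` of the
Lagrange series has order `≥ n` (so the series converges `x`-adically, its sum being the
coefficientwise stabilized limit), and its sum equals `(f∘w)·(1 − a′∘w)^{-1}`, where
`1 − a′∘w` has constant term `1` and hence is a unit (with inverse `Ring.inverse`). -/
theorem statement2 (a f : PowerSeries R) (ha : (X : PowerSeries R) ^ 2 ∣ a) :
    (∃! w : PowerSeries R, constantCoeff w = 0 ∧ w = X + comp a w) ∧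
    ∀ w : PowerSeries R, constantCoeff w = 0 → w = X + comp a w →
      (∀ n N : ℕ, N < n → coeff N (lagrangeTerm a f n) = 0) ∧
      constantCoeff (1 - comp (d⁄dX R a) w) = 1 ∧
      (PowerSeries.mk fun N => ∑ n ∈ Finset.range (N + 1), coeff N (lagrangeTerm a f n)) =
        comp f w * Ring.inverse (1 - comp (d⁄dX R a) w) := by
  obtain ⟨c, hc, rfl⟩ : ∃ c : R⟦X⟧, constantCoeff c = 0 ∧ a = X * c := by
    obtain ⟨b, rfl⟩ := ha
    exact ⟨X * b, by simp, by ring⟩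
  have hu : IsUnit (1 - c) := isUnit_iff_constantCoeff.mpr (by simp [hc])
  have hXu : X * (hu.unit : R⟦X⟧) = X - X * c := by rw [hu.unit_spec]; ring
  have hsubst (w : R⟦X⟧) (hw : constantCoeff w = 0) :
      w = X + comp (X * c) w ↔ (X * (hu.unit : R⟦X⟧)).subst w = X := by
    rw [hXu, subst_X_sub_eq_X_iff hw]
  refine ⟨?_, fun w hw0 hw => ?_⟩
  · refine (existsUnique_congr fun w => and_congr_right (hsubst w)).mpr ?_
    exact existsUnique_subst_eq_X (by simp) (by simp [hc])
  have hw' := HasSubst.of_constantCoeff_zero' hw0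
  have huw := (hsubst w hw0).mp hw
  have hinv : Ring.inverse (1 - comp (d⁄dX R (X * c)) w) = d⁄dX R w :=
    Ring.inverse_unit (Units.mkOfMulEqOne _ _ (one_sub_comp_derivative_mul_derivative hw0 hw))
  have : IsAddTorsionFree R := .of_module_rat R
  refine ⟨fun n N hN => coeff_lagrangeTerm_eq_zero ha f hN, by simp [comp, hc], ?_⟩
  rw [hinv, comp_eq_subst hw0, ← lagrangeMap_eq_subst_mul_derivative hu.unit hw' huw]
  ext N
  rw [coeff_mk, sum_coeff_lagrangeTerm hc hu.unit_spec]

end Formal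
end
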